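/- Let w be a cyclic word and τ a Whitehead automorphism with multiplier a such that |τ(w)| ≤ |w|. Then every letter appearing in τ(w) (up to inversion) already appears in w, i.e. L(τ(w)) ⊆ L(w). -/

import Mathlib

open FreeGroup

/-- The length of a cyclic word (conjugacy class): the minimal word length of a representative. -/
noncomputable def cycLen {X : Type} [DecidableEq X] (c : ConjClasses (FreeGroup X)) : ℕ :=
  sInf {n | ∃ g : FreeGroup X, ConjClasses.mk g = c ∧ (FreeGroup.toWord g).length = n}

/-- An element of a free group is cyclically reduced if its first letter is not
the inverse of its last letter. -/
def IsCycRed {X : Type} [DecidableEq X] (g : FreeGroup X) : Prop :=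
  ∀ x : X × Bool, (FreeGroup.toWord g).head? = some x →
    (FreeGroup.toWord g).getLast? ≠ some (x.1, !x.2)

/-- The set `L(c)` of letters of `X` occurring (up to inversion) in the cyclic word `c`. -/
def usedLetters {X : Type} [DecidableEq X] (c : ConjClasses (FreeGroup X)) : Set X :=
  {x | ∃ g : FreeGroup X, ConjClasses.mk g = c ∧ IsCycRed g ∧ ∃ b : Bool, (x, b) ∈ FreeGroup.toWord g}

/-- The action of an automorphism of the free group on cyclic words (conjugacy classes). -/
def actC {X : Type} (φ : FreeGroup X ≃* FreeGroup X) (c : ConjClasses (FreeGroup X)) :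
    ConjClasses (FreeGroup X) :=
  ConjClasses.map (φ : FreeGroup X →* FreeGroup X) c

/-- `τ` is a Whitehead automorphism of the second kind with multiplier `a ∈ X ∪ X⁻¹`. -/
def IsWhiteheadMult {X : Type} (a : X × Bool) (τ : FreeGroup X ≃* FreeGroup X) : Prop :=
  ∀ x : X, τ (of x) ∈ ({of x, of x * FreeGroup.mk [a],
      (FreeGroup.mk [a])⁻¹ * of x, (FreeGroup.mk [a])⁻¹ * of x * FreeGroup.mk [a]} :
      Set (FreeGroup X))

/-- `τ` is a relabeling automorphism: it permutes the set `X ∪ X⁻¹`. -/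
def IsRelabeling {X : Type} (τ : FreeGroup X ≃* FreeGroup X) : Prop :=
  ∀ x : X, ∃ y : X × Bool, τ (of x) = FreeGroup.mk [y]

/-- Whitehead automorphisms. -/
def IsWhitehead {X : Type} (τ : FreeGroup X ≃* FreeGroup X) : Prop :=
  IsRelabeling τ ∨ ∃ a : X × Bool, IsWhiteheadMult a τ

/-!
Let `u` and `g` be cyclically reduced representatives of `w` and `τ(w)`, and suppose the letter
`x` occurs in `g` but not in `u`. Erasing `x` is a homomorphism `ε_x` of the free group, and
`ε_x(g)` is conjugate to `ε_x(τ u)`. If `x` is the multiplier letter then `ε_x ∘ τ = ε_x`,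
so `ε_x(τ u) = u`; otherwise `τ` maps words avoiding `x` to words avoiding `x`, so
`ε_x(τ u) = τ u`. Either way `ε_x(g)` represents a class of length at least `|τ(w)| = |g|`
(using `|τ(w)| ≤ |w|` in the first case), while it is strictly shorter than `g`.
-/

namespace FreeGroup

variable {α : Type*} [DecidableEq α]

theorem norm_pow_le (u : FreeGroup α) (n : ℕ) : (u ^ n).norm ≤ n * u.norm := by
  induction n with
  | zero => simp
  | succ n ih =>
    rw [pow_succ, add_one_mul]
    exact (norm_mul_le _ _).trans (by omega)

theorem norm_pow_of_isCyclicallyReduced {g : FreeGroup α} (hg : IsCyclicallyReduced g.toWord)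
    (n : ℕ) : (g ^ n).norm = n * g.norm := by
  rw [norm, toWord_pow, (hg.flatten_replicate n).isReduced.reduce_eq]
  simp [norm]

/-- `n |g| = |c uⁿ c⁻¹| ≤ n |u| + 2 |c|` for every `n`. -/
theorem norm_le_of_isConj {g u : FreeGroup α} (hg : IsCyclicallyReduced g.toWord)
    (h : IsConj u g) : g.norm ≤ u.norm := by
  obtain ⟨c, rfl⟩ := isConj_iff.mp h
  have bound : ∀ n : ℕ, n * (c * u * c⁻¹).norm ≤ c.norm + n * u.norm + c.norm := fun n =>
    calc n * (c * u * c⁻¹).norm = (c * u ^ n * c⁻¹).norm := by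
          rw [← norm_pow_of_isCyclicallyReduced hg, conj_pow]
      _ ≤ (c * u ^ n).norm + c⁻¹.norm := norm_mul_le _ _
      _ ≤ c.norm + n * u.norm + c.norm := by
          rw [norm_inv_eq]
          linarith [norm_mul_le c (u ^ n), norm_pow_le u n]
  by_contra! hlt
  nlinarith [bound (2 * c.norm + 1)]

theorem exists_isConj_isCyclicallyReduced (u : FreeGroup α) :
    ∃ g : FreeGroup α, IsConj u g ∧ IsCyclicallyReduced g.toWord := by
  have hu := congrArg mk (reduceCyclically.conj_conjugator_reduceCyclically u.toWord)
  rw [mk_toWord, ← mul_mk, ← mul_mk, ← inv_mk] at hu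
  have hR := reduceCyclically.isCyclicallyReduced (isReduced_toWord (x := u))
  refine ⟨mk (reduceCyclically u.toWord), (isConj_iff.mpr ⟨_, hu⟩).symm, ?_⟩
  rwa [toWord_mk, hR.isReduced.reduce_eq]

def eraseLetter (x : α) : FreeGroup α →* FreeGroup α :=
  FreeGroup.lift fun y => if y = x then 1 else of y

theorem eraseLetter_mk (x : α) (L : List (α × Bool)) :
    eraseLetter x (mk L) = mk (L.filter (·.1 ≠ x)) := by
  induction L with
  | nil => rfl
  | cons p L ih =>
    rw [← List.singleton_append, ← mul_mk, _root_.map_mul, ih, List.filter_append, ← mul_mk]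
    obtain ⟨y, _ | _⟩ := p <;> by_cases hy : y = x <;>
      simp [eraseLetter, hy, of, inv_mk, invRev, mul_mk]

theorem eraseLetter_eq_self {x : α} {u : FreeGroup α} (h : ∀ b, (x, b) ∉ u.toWord) :
    eraseLetter x u = u := by
  conv_lhs => rw [← mk_toWord (x := u)]
  rw [eraseLetter_mk, List.filter_eq_self.mpr, mk_toWord]
  rintro ⟨y, b⟩ hy
  simpa using fun hyx : y = x => h b (hyx ▸ hy)

theorem norm_eraseLetter_lt {x : α} {b : Bool} {u : FreeGroup α} (h : (x, b) ∈ u.toWord) :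
    (eraseLetter x u).norm < u.norm := by
  rw [← mk_toWord (x := u), eraseLetter_mk, mk_toWord]
  exact norm_mk_le.trans_lt (List.length_filter_lt_length_iff_exists.mpr ⟨_, h, by simp⟩)

end FreeGroup

section CyclicWords

variable {X : Type} [DecidableEq X]

theorem isCycRed_iff {g : FreeGroup X} : IsCycRed g ↔ IsCyclicallyReduced g.toWord := by
  simp only [IsCycRed, isCyclicallyReduced_iff, isReduced_toWord, true_and, Option.mem_def]
  constructor
  · rintro h ⟨y, b⟩ hlast ⟨y', b'⟩ hhead (rfl : y = y')
    by_contra hb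
    exact h _ hhead (by rwa [← Bool.eq_not_of_ne hb])
  · rintro h x hhead hlast
    simpa using h _ hlast x hhead rfl

theorem exists_isCycRed_rep (c : ConjClasses (FreeGroup X)) :
    ∃ g : FreeGroup X, ConjClasses.mk g = c ∧ IsCycRed g := by
  obtain ⟨u, rfl⟩ := ConjClasses.mk_surjective c
  obtain ⟨g, hug, hg⟩ := exists_isConj_isCyclicallyReduced u
  exact ⟨g, (ConjClasses.mk_eq_mk_iff_isConj.mpr hug).symm, isCycRed_iff.mpr hg⟩

theorem cycLen_mk_le (u : FreeGroup X) : cycLen (ConjClasses.mk u) ≤ u.norm :=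
  Nat.sInf_le ⟨u, rfl, rfl⟩

theorem cycLen_mk_of_isCycRed {g : FreeGroup X} (hg : IsCycRed g) :
    cycLen (ConjClasses.mk g) = g.norm := by
  refine (cycLen_mk_le g).antisymm (le_csInf ⟨_, g, rfl, rfl⟩ ?_)
  rintro _ ⟨u, hug, rfl⟩
  exact norm_le_of_isConj (isCycRed_iff.mp hg) (ConjClasses.mk_eq_mk_iff_isConj.mp hug)

end CyclicWords

namespace IsWhiteheadMult

variable {X : Type} [DecidableEq X] {a : X × Bool} {τ : FreeGroup X ≃* FreeGroup X}

theorem eraseLetter_apply (hτ : IsWhiteheadMult a τ) (u : FreeGroup X) :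
    eraseLetter a.1 (τ u) = eraseLetter a.1 u := by
  suffices (eraseLetter a.1).comp (τ : FreeGroup X →* FreeGroup X) = eraseLetter a.1 from
    DFunLike.congr_fun this u
  have ha : eraseLetter a.1 (mk [a]) = 1 := by simp [eraseLetter_mk, ← one_eq_mk]
  refine ext_hom _ _ fun y => ?_
  obtain h | h | h | h : _ ∨ _ ∨ _ ∨ τ (of y) = _ := hτ y <;> simp [h, ha, -inv_mk]

/-- `τ` maps words avoiding a letter `x ≠ a.1` to words avoiding `x`. -/
theorem eraseLetter_apply_eraseLetter (hτ : IsWhiteheadMult a τ) {x : X} (hx : x ≠ a.1)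
    (u : FreeGroup X) :
    eraseLetter x (τ (eraseLetter x u)) = τ (eraseLetter x u) := by
  suffices (eraseLetter x).comp ((τ : FreeGroup X →* FreeGroup X).comp (eraseLetter x)) =
      (τ : FreeGroup X →* FreeGroup X).comp (eraseLetter x) from
    DFunLike.congr_fun this u
  have ha : eraseLetter x (mk [a]) = mk [a] := by simp [eraseLetter_mk, Ne.symm hx]
  refine ext_hom _ _ fun y => ?_
  by_cases hy : y = x
  · simp [eraseLetter, hy]
  · have hy' : eraseLetter x (of y) = of y := by simp [eraseLetter, hy]
    obtain h | h | h | h : _ ∨ _ ∨ _ ∨ τ (of y) = _ := hτ y <;> simp [hy', h, ha, -inv_mk]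

end IsWhiteheadMult

/-- If `τ` is a Whitehead automorphism with multiplier `a` and `|τ(w)| ≤ |w|`,
then every letter of `τ(w)` (up to inversion) already appears in `w`. -/
theorem whitehead_letters_subset {X : Type} [DecidableEq X]
    (w : ConjClasses (FreeGroup X)) (a : X × Bool) (τ : FreeGroup X ≃* FreeGroup X)
    (hτ : IsWhiteheadMult a τ) (hlen : cycLen (actC τ w) ≤ cycLen w) :
    usedLetters (actC τ w) ⊆ usedLetters w := by
  rintro x ⟨g, hgτw, hg, b, hxg⟩
  obtain ⟨u, rfl, hu⟩ := exists_isCycRed_rep w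
  by_contra hxw
  have hxu : ∀ b, (x, b) ∉ u.toWord := fun b hb => hxw ⟨u, rfl, hu, b, hb⟩
  have hconj : ConjClasses.mk (eraseLetter x g) = ConjClasses.mk (eraseLetter x (τ u)) :=
    ConjClasses.mk_eq_mk_iff_isConj.mpr
      ((eraseLetter x).map_isConj (ConjClasses.mk_eq_mk_iff_isConj.mp hgτw))
  have hle : cycLen (actC τ (ConjClasses.mk u)) ≤ cycLen (ConjClasses.mk (eraseLetter x g)) := by
    rcases eq_or_ne x a.1 with rfl | hxa
    · rwa [hconj, hτ.eraseLetter_apply, eraseLetter_eq_self hxu]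
    · have hfix := hτ.eraseLetter_apply_eraseLetter hxa u
      rw [eraseLetter_eq_self hxu] at hfix
      rw [hconj, hfix]
      rfl
  rw [← hgτw, cycLen_mk_of_isCycRed hg] at hle
  have := cycLen_mk_le (eraseLetter x g)
  have := norm_eraseLetter_lt hxg
  omega
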